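/- arXiv:math/0212158 — 7 statements merged into one kernel-verified Lean document; each statement's English description precedes it below -/
import Mathlib

section
/- Let A be a commutative ring. Every globally rational formal power series f ∈ A[[t]] is determinantally rational. -/
/-- A formal power series `f ∈ A[[t]]` is *globally rational* if there exist polynomials
`g, h ∈ A[t]` such that `f` is the unique solution in `A[[t]]` of `g·x = h`. -/
def GloballyRational {A : Type*} [CommRing A] (f : PowerSeries A) : Prop :=
  ∃ g h : Polynomial A,
    (g : PowerSeries A) * f = (h : PowerSeries A) ∧
    ∀ x : PowerSeries A, (g : PowerSeries A) * x = (h : PowerSeries A) → x = f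

/-- A formal power series `f = Σ aᵢ tⁱ ∈ A[[t]]` is *determinantally rational* if there exist
`m n : ℕ` such that for all `i > n` the `(m+1)×(m+1)` Hankel determinant
`det (a_{i+j+k})_{0 ≤ j,k ≤ m}` vanishes. -/
def DeterminantallyRational {A : Type*} [CommRing A] (f : PowerSeries A) : Prop :=
  ∃ m n : ℕ, ∀ i > n,
    Matrix.det (Matrix.of fun j k : Fin (m + 1) =>
      PowerSeries.coeff (i + j.1 + k.1) f) = 0

/-! If `g * f = h` and `m = natDegree g`, the coefficients of `g * f` vanish in degrees above
`natDegree h`; for `i > natDegree h` this says exactly that the Hankel matrix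
`H_i = (a_{i+j+k})_{0 ≤ j,k ≤ m}` kills the reversed coefficient vector of `g`. Multiplying by the
adjugate, `det H_i` annihilates every coefficient of `g`, i.e. `g * det H_i = 0`. Uniqueness of the
solution of `g * x = h` makes `g` a non-zero-divisor of `A⟦X⟧`, so `det H_i = 0`. -/

open PowerSeries Matrix
open scoped Polynomial

theorem isLeftRegular_of_forall_mul_eq_imp_eq {R : Type*} [Ring R] {a b x₀ : R}
    (hx₀ : a * x₀ = b) (huniq : ∀ x, a * x = b → x = x₀) : IsLeftRegular a := by
  intro y z hyz
  have hsol : a * (x₀ + (y - z)) = b := by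
    rw [mul_add, mul_sub, show a * y = a * z from hyz, sub_self, add_zero, hx₀]
  simpa [sub_eq_zero] using huniq _ hsol

theorem Matrix.det_smul_eq_zero_of_mulVec_eq_zero {R n : Type*} [CommRing R] [Fintype n]
    [DecidableEq n] {M : Matrix n n R} {v : n → R} (hv : M *ᵥ v = 0) : M.det • v = 0 := by
  simpa [adjugate_mul, smul_mulVec] using congr(M.adjugate *ᵥ $hv)

section

variable {A : Type*} [CommRing A]

noncomputable def PowerSeries.hankel (f : A⟦X⟧) (m i : ℕ) :
    Matrix (Fin (m + 1)) (Fin (m + 1)) A :=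
  Matrix.of fun j k => coeff (i + j.1 + k.1) f

theorem Polynomial.coeff_add_natDegree_coe_mul (g : A[X]) (f : A⟦X⟧) (N : ℕ) :
    PowerSeries.coeff (N + g.natDegree) ((g : A⟦X⟧) * f) =
      ∑ k : Fin (g.natDegree + 1), PowerSeries.coeff (N + k) f * g.coeff k.rev := by
  rw [PowerSeries.coeff_mul, Finset.Nat.sum_antidiagonal_eq_sum_range_succ_mk,
    show (N + g.natDegree).succ = g.natDegree + 1 + N by omega, Finset.sum_range_add,
    Finset.sum_eq_zero (s := Finset.range N) fun k _ => by
      rw [Polynomial.coeff_coe, Polynomial.coeff_eq_zero_of_natDegree_lt (by omega), zero_mul],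
    add_zero, ← Fin.sum_univ_eq_sum_range, ← Equiv.sum_comp Fin.revPerm]
  refine Fintype.sum_congr _ _ fun k => ?_
  simp only [Polynomial.coeff_coe, Fin.revPerm_apply, Fin.val_rev]
  rw [mul_comm, show N + g.natDegree - (g.natDegree + 1 - (k + 1)) = N + k by omega]

theorem PowerSeries.hankel_mulVec_coeff_rev_eq_zero {f : A⟦X⟧} {g h : A[X]}
    (hgf : (g : A⟦X⟧) * f = h) {i : ℕ} (hi : h.natDegree < i) :
    hankel f g.natDegree i *ᵥ (fun k => g.coeff k.rev) = 0 := by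
  funext j
  rw [Pi.zero_apply, ← h.coeff_eq_zero_of_natDegree_lt (n := i + j + g.natDegree) (by omega),
    ← Polynomial.coeff_coe, ← hgf, Polynomial.coeff_add_natDegree_coe_mul]
  rfl

theorem Polynomial.C_mul_eq_zero_of_smul_coeff_rev_eq_zero {g : A[X]} {a : A}
    (ha : a • (fun k : Fin (g.natDegree + 1) => g.coeff k.rev) = 0) : C a * g = 0 := by
  ext l
  rw [coeff_C_mul, coeff_zero]
  rcases le_or_gt l g.natDegree with hl | hl
  · simpa [Nat.sub_sub_self hl] using congr_fun ha (Fin.rev ⟨l, Nat.lt_succ_of_le hl⟩)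
  · rw [coeff_eq_zero_of_natDegree_lt hl, mul_zero]

end

/-- Every globally rational power series is determinantally rational. -/
theorem globallyRational_implies_determinantallyRational
    {A : Type*} [CommRing A] (f : PowerSeries A)
    (hf : GloballyRational f) : DeterminantallyRational f := by
  obtain ⟨g, h, hgf, huniq⟩ := hf
  have hreg : IsLeftRegular (g : A⟦X⟧) := isLeftRegular_of_forall_mul_eq_imp_eq hgf huniq
  refine ⟨g.natDegree, h.natDegree, fun i hi => ?_⟩
  have hdet := det_smul_eq_zero_of_mulVec_eq_zero (hankel_mulVec_coeff_rev_eq_zero hgf hi)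
  have hCg : (g : A⟦X⟧) * PowerSeries.C (hankel f g.natDegree i).det = g * 0 := by
    rw [mul_comm, ← Polynomial.coe_C, ← Polynomial.coe_mul,
      Polynomial.C_mul_eq_zero_of_smul_coeff_rev_eq_zero hdet, Polynomial.coe_zero, mul_zero]
  simpa [hankel] using congr_arg constantCoeff (hreg hCg)
end

section
/- Let A = ℤ[x]/(x²). There exists a formal power series f ∈ A[[t]] that is determinantally rational but not globally rational. -/
/-- The ring `A = ℤ[x]/(x²)`. -/
abbrev ZxModXSq : Type :=
  Polynomial ℤ ⧸ Ideal.span ({Polynomial.X ^ 2} : Set (Polynomial ℤ))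

/-!
Write `A = R[x]/(x²)` and `ε` for the class of `x`. The series `f = ε · Σₖ t^(2^k)` is
determinantally rational because any product of two of its coefficients lies in `ε² A = 0`.
If `g f = h` had `f` as its unique solution, `g` would be a non-zero-divisor of `A[[t]]`, so
its reduction `G ∈ R[t]` modulo `ε` is nonzero (otherwise `ε g = 0`). Since `ε a = ε · a(0)`,
we get `g f = ε · (G · Σₖ t^(2^k))`, and `G · Σₖ t^(2^k)` is not a polynomial: for
`2^k > deg G` its coefficient of `t^(deg G + 2^(k+1))` is the leading coefficient of `G`.
-/

open Polynomial
open scoped PowerSeries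

theorem GloballyRational.exists_mul_eq_of_mem_nonZeroDivisors {A : Type*} [CommRing A]
    {f : A⟦X⟧} (hf : GloballyRational f) :
    ∃ g h : A[X], (g : A⟦X⟧) ∈ nonZeroDivisors A⟦X⟧ ∧ (g : A⟦X⟧) * f = h := by
  obtain ⟨g, h, hgf, huniq⟩ := hf
  refine ⟨g, h, mem_nonZeroDivisors_iff_right.2 fun y hy => ?_, hgf⟩
  have : f + y = f := huniq _ (by rw [mul_add, hgf, mul_comm, hy, add_zero])
  simpa using this

theorem DeterminantallyRational.of_coeff_mul_coeff_eq_zero {A : Type*} [CommRing A]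
    {f : A⟦X⟧} (hf : ∀ i j, PowerSeries.coeff i f * PowerSeries.coeff j f = 0) :
    DeterminantallyRational f :=
  ⟨1, 0, fun i _ => by simp [Matrix.det_fin_two, hf]⟩

namespace PowerSeries

noncomputable def sumXPowTwoPow (R : Type*) [Semiring R] : R⟦X⟧ :=
  mk ((Set.range (2 ^ ·)).indicator 1)

theorem notMem_range_two_pow {k q : ℕ} (hlo : 2 ^ k < q) (hhi : q < 2 ^ (k + 2))
    (hne : q ≠ 2 ^ (k + 1)) : q ∉ Set.range (2 ^ · : ℕ → ℕ) := by
  rintro ⟨j, rfl⟩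
  have h1 := (Nat.pow_lt_pow_iff_right one_lt_two).1 hlo
  have h2 := (Nat.pow_lt_pow_iff_right one_lt_two).1 hhi
  exact hne (by congr 1; omega)

theorem coeff_coe_mul_sumXPowTwoPow {R : Type*} [Semiring R] {G : R[X]} {k p : ℕ}
    (hG : G.natDegree < 2 ^ k) (hp : p < 2 ^ k) :
    coeff (p + 2 ^ (k + 1)) ((G : R⟦X⟧) * sumXPowTwoPow R) = G.coeff p := by
  have hpow : 2 ^ (k + 2) = 2 * 2 ^ (k + 1) ∧ 2 ^ (k + 1) = 2 * 2 ^ k := by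
    constructor <;> ring
  rw [coeff_mul, Finset.sum_eq_single (p, 2 ^ (k + 1))]
  · simp [sumXPowTwoPow]
  · rintro ⟨a, q⟩ haq hne
    rw [Finset.HasAntidiagonal.mem_antidiagonal] at haq
    rcases le_or_gt a G.natDegree with ha | ha
    · have hq : q ≠ 2 ^ (k + 1) := fun hq => hne (by simp only [hq] at haq ⊢; congr; omega)
      simp [sumXPowTwoPow, Set.indicator_of_notMem (notMem_range_two_pow (k := k)
        (by omega) (by omega) hq)]
    · simp [coeff_eq_zero_of_natDegree_lt ha]
  · simp

end PowerSeries

abbrev QuotXSq (R : Type*) [CommRing R] : Type _ := R[X] ⧸ Ideal.span {(X : R[X]) ^ 2}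

namespace QuotXSq

variable {R : Type*} [CommRing R]

noncomputable def eps : QuotXSq R := Ideal.Quotient.mk _ X

noncomputable def constCoeff : QuotXSq R →+* R :=
  Ideal.Quotient.lift _ Polynomial.constantCoeff fun p hp => by
    obtain ⟨q, rfl⟩ := Ideal.mem_span_singleton.1 hp
    simp

theorem eps_mul_self : (eps : QuotXSq R) * eps = 0 := by
  rw [eps, ← map_mul, ← sq]; exact Ideal.Quotient.eq_zero_iff_mem.2 (Ideal.subset_span rfl)

theorem constCoeff_comp_algebraMap : constCoeff.comp (algebraMap R (QuotXSq R)) = RingHom.id R :=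
  RingHom.ext fun r => by
    rw [RingHom.comp_apply, ← Ideal.Quotient.mk_algebraMap, Polynomial.algebraMap_apply]
    simp [constCoeff]

theorem eps_mul (a : QuotXSq R) : eps * a = eps * algebraMap R _ (constCoeff a) := by
  obtain ⟨p, rfl⟩ := Ideal.Quotient.mk_surjective a
  rw [eps, ← Ideal.Quotient.mk_algebraMap, ← map_mul, ← map_mul, Ideal.Quotient.eq,
    Ideal.mem_span_singleton, Polynomial.algebraMap_apply]
  simpa [constCoeff, sq, mul_sub] using mul_dvd_mul_left X (X_dvd_sub_C (p := p))

theorem eps_mul_algebraMap_eq_zero_iff {r : R} :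
    eps * algebraMap R (QuotXSq R) r = 0 ↔ r = 0 := by
  refine ⟨fun h => ?_, fun h => by simp [h]⟩
  rw [eps, ← Ideal.Quotient.mk_algebraMap, ← map_mul, Ideal.Quotient.eq_zero_iff_mem,
    Ideal.mem_span_singleton, Polynomial.algebraMap_apply] at h
  obtain ⟨q, hq⟩ := h
  simpa [sq, mul_assoc, coeff_X_mul] using congrArg (coeff · 1) hq

theorem eps_ne_zero [Nontrivial R] : (eps : QuotXSq R) ≠ 0 := fun h => by
  simpa using (eps_mul_algebraMap_eq_zero_iff (r := (1 : R))).1 (by simp [h])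

theorem C_eps_mul (p : (QuotXSq R)⟦X⟧) :
    PowerSeries.C eps * p =
      PowerSeries.C eps * PowerSeries.map (algebraMap R _) (PowerSeries.map constCoeff p) := by
  ext n
  simp only [PowerSeries.coeff_C_mul, PowerSeries.coeff_map]
  exact eps_mul _

variable (R) in
noncomputable def epsSumXPowTwoPow : (QuotXSq R)⟦X⟧ :=
  PowerSeries.C eps * PowerSeries.map (algebraMap R _) (PowerSeries.sumXPowTwoPow R)

theorem determinantallyRational_epsSumXPowTwoPow : DeterminantallyRational (epsSumXPowTwoPow R) :=
  .of_coeff_mul_coeff_eq_zero fun i j => by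
    simp only [epsSumXPowTwoPow, PowerSeries.coeff_C_mul]
    rw [mul_mul_mul_comm, eps_mul_self, zero_mul]

theorem coe_mul_epsSumXPowTwoPow (g : (QuotXSq R)[X]) :
    (g : (QuotXSq R)⟦X⟧) * epsSumXPowTwoPow R =
      PowerSeries.C eps * PowerSeries.map (algebraMap R _)
        ((g.map constCoeff : R⟦X⟧) * PowerSeries.sumXPowTwoPow R) := by
  rw [epsSumXPowTwoPow, mul_left_comm, C_eps_mul, map_mul, map_mul, polynomial_map_coe,
    ← RingHom.comp_apply (PowerSeries.map constCoeff), ← PowerSeries.map_comp,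
    constCoeff_comp_algebraMap, PowerSeries.map_id, id, map_mul]

theorem map_constCoeff_ne_zero [Nontrivial R] {g : (QuotXSq R)[X]}
    (hg : (g : (QuotXSq R)⟦X⟧) ∈ nonZeroDivisors _) : g.map constCoeff ≠ 0 := by
  intro h0
  have : PowerSeries.C eps * (g : (QuotXSq R)⟦X⟧) = 0 := by
    rw [C_eps_mul, ← polynomial_map_coe, h0]
    simp
  exact eps_ne_zero <| PowerSeries.C_injective <| by
    simpa using mem_nonZeroDivisors_iff_right.1 hg _ this

theorem not_globallyRational_epsSumXPowTwoPow [Nontrivial R] :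
    ¬ GloballyRational (epsSumXPowTwoPow R) := by
  intro hf
  obtain ⟨g, h, hg, hgf⟩ := hf.exists_mul_eq_of_mem_nonZeroDivisors
  set G := g.map constCoeff
  obtain ⟨k, hGk, hhk⟩ : ∃ k, G.natDegree < 2 ^ k ∧ h.natDegree < 2 ^ (k + 1) :=
    ⟨G.natDegree + h.natDegree, by grind [Nat.lt_two_pow_self, Nat.pow_le_pow_right]⟩
  have hcoeff := congrArg (PowerSeries.coeff (G.natDegree + 2 ^ (k + 1))) hgf
  rw [coe_mul_epsSumXPowTwoPow, PowerSeries.coeff_C_mul, PowerSeries.coeff_map,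
    PowerSeries.coeff_coe_mul_sumXPowTwoPow hGk hGk, Polynomial.coeff_coe,
    coeff_eq_zero_of_natDegree_lt (p := h) (by omega),
    eps_mul_algebraMap_eq_zero_iff] at hcoeff
  exact map_constCoeff_ne_zero hg (leadingCoeff_eq_zero.1 hcoeff)

end QuotXSq

/-- Over `ℤ[x]/(x²)` there is a power series which is determinantally rational but not
globally rational. -/
theorem exists_determinantallyRational_not_globallyRational :
    ∃ f : PowerSeries ZxModXSq,
      DeterminantallyRational f ∧ ¬ GloballyRational f :=
  ⟨QuotXSq.epsSumXPowTwoPow ℤ, QuotXSq.determinantallyRational_epsSumXPowTwoPow,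
    QuotXSq.not_globallyRational_epsSumXPowTwoPow⟩
end

section
/- Let A = ℤ[x₁, x₂, …]/(x₁², x₂², …), the polynomial ring over ℤ in countably many variables modulo the ideal generated by the squares of all the variables. The power series f(t) = Σ_{i≥1} x_i t^i ∈ A[[t]] is pointwise rational but not determinantally rational. -/
/-- A formal power series `f ∈ A[[t]]` is *pointwise rational* if for every field `K` and every
ring homomorphism `φ : A → K` the image series `Σ φ(aᵢ) tⁱ` is rational over `K`. -/
def PointwiseRational {A : Type*} [CommRing A] (f : PowerSeries A) : Prop :=
  ∀ (K : Type*) [Field K], ∀ φ : A →+* K,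
    ∃ g h : Polynomial K, g ≠ 0 ∧
      (g : PowerSeries K) * PowerSeries.map φ f = (h : PowerSeries K)

/-- The ring `A = ℤ[x₁, x₂, …]/(x₁², x₂², …)`: the polynomial ring over `ℤ` in countably many
variables `xᵢ` (indexed by positive naturals) modulo the squares of all variables. -/
abbrev SquareZeroVarsRing : Type :=
  MvPolynomial ℕ+ ℤ ⧸
    Ideal.span (Set.range fun i : ℕ+ => (MvPolynomial.X i : MvPolynomial ℕ+ ℤ) ^ 2)

/-- The image of the variable `xᵢ` (for `i ≥ 1`) in `ℤ[x₁, x₂, …]/(x₁², x₂², …)`. -/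
noncomputable def squareZeroVar (i : ℕ+) : SquareZeroVarsRing :=
  Ideal.Quotient.mk _ (MvPolynomial.X i)

/-!
Each `xᵢ` squares to zero, so it dies under every map to a field, where `f` becomes `0`.
On the other hand the Hankel determinant `det (x_{i+j+k})_{j,k ≤ m}` is nonzero in `A`: lifted to
`ℤ[x₁, x₂, …]`, its coefficient at the squarefree monomial `x_i x_{i+2} ⋯ x_{i+2m}` is `1`, because
a permutation `τ` with `{τ k + k}ₖ = {2k}ₖ` as multisets has `∑ (τ k + k)² = ∑ (2k)²`, i.e.
`∑ (τ k - k)² = 0`, so only the identity contributes; and no element of `(x₁², x₂², …)` has a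
nonzero squarefree coefficient.
-/

open Finset Matrix Equiv Function MvPolynomial

theorem Equiv.Perm.eq_one_of_sum_add_sq_eq {ι R : Type*} [Fintype ι] [CommRing R] [LinearOrder R]
    [IsStrictOrderedRing R] {f : ι → R} (hf : Injective f) {τ : Perm ι}
    (h : ∑ k, (f (τ k) + f k) ^ 2 = ∑ k, (2 * f k) ^ 2) : τ = 1 := by
  have hτ : ∑ k, f (τ k) ^ 2 = ∑ k, f k ^ 2 := Equiv.sum_comp τ (f · ^ 2)
  have hsum : ∑ k, (f (τ k) - f k) ^ 2 = 0 := by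
    have e : ∀ k, (f (τ k) - f k) ^ 2 = 2 * f (τ k) ^ 2 + 2 * f k ^ 2 - (f (τ k) + f k) ^ 2 :=
      fun k => by ring
    simp only [e, sum_sub_distrib, sum_add_distrib, ← mul_sum, hτ, h, mul_pow]
    ring
  ext k
  have := (sum_eq_zero_iff_of_nonneg fun k _ => sq_nonneg (f (τ k) - f k)).mp hsum k (mem_univ k)
  exact hf (sub_eq_zero.mp (pow_eq_zero_iff two_ne_zero |>.mp this))

theorem Finsupp.sum_single_one_apply_le_one {ι σ : Type*} [Fintype ι] {c : ι → σ} (hc : Injective c)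
    (s : σ) : (∑ k, Finsupp.single (c k) 1) s ≤ 1 := by
  classical
  rw [Finsupp.finsetSum_apply]
  simp only [Finsupp.single_apply, sum_boole]
  exact card_le_one.mpr fun a ha b hb => hc ((mem_filter.mp ha).2.trans (mem_filter.mp hb).2.symm)

namespace MvPolynomial

variable {σ R : Type*}

theorem coeff_eq_zero_of_mem_span_X_sq [CommSemiring R] {p : MvPolynomial σ R}
    (hp : p ∈ Ideal.span (Set.range fun s => (X s : MvPolynomial σ R) ^ 2))
    {e : σ →₀ ℕ} (he : ∀ s, e s ≤ 1) : coeff e p = 0 := by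
  have hgen : Set.range (fun s => (X s : MvPolynomial σ R) ^ 2) =
      (fun d => monomial d 1) '' Set.range fun s => Finsupp.single s 2 := by
    rw [← Set.range_comp]
    simp only [comp_def, X_pow_eq_monomial]
  rw [hgen, mem_ideal_span_monomial_image] at hp
  by_contra hne
  obtain ⟨_, ⟨s, rfl⟩, hle⟩ := hp e (mem_support_iff.mpr hne)
  have := (he s).trans' (hle s)
  simp at this

theorem coeff_det_of_X [CommRing R] [DecidableEq σ] {n : Type*} [Fintype n] [DecidableEq n]
    (v : n → n → σ) (e : σ →₀ ℕ) :
    coeff e (det (of fun j k => (X (v j k) : MvPolynomial σ R))) =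
      ∑ τ : Perm n, if ∑ k, Finsupp.single (v (τ k) k) 1 = e then (Perm.sign τ : R) else 0 := by
  rw [det_apply, coeff_sum]
  refine sum_congr rfl fun τ _ => ?_
  simp only [of_apply, X, ← monomial_sum_one, Units.smul_def, coeff_smul, coeff_monomial]
  split_ifs <;> simp

theorem coeff_det_hankel_X [CommRing R] {v : ℕ → σ} (hv : Injective v) (m : ℕ) :
    coeff (∑ k : Fin (m + 1), Finsupp.single (v (2 * k)) 1)
      (det (of fun j k : Fin (m + 1) => (X (v (j + k)) : MvPolynomial σ R))) = 1 := by
  classical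
  have key : ∀ τ : Perm (Fin (m + 1)),
      ∑ k, Finsupp.single (v (τ k + k)) 1 = ∑ k : Fin (m + 1), Finsupp.single (v (2 * k)) 1 ↔
        τ = 1 := by
    refine fun τ => ⟨fun h => ?_, by rintro rfl; simp [two_mul]⟩
    have h' : Finsupp.mapDomain v (∑ k, Finsupp.single ((τ k : ℕ) + k) 1) =
        Finsupp.mapDomain v (∑ k : Fin (m + 1), Finsupp.single (2 * (k : ℕ)) 1) := by
      simpa [Finsupp.mapDomain_finsetSum] using h
    have h := congrArg (Finsupp.weight fun a : ℕ => (a : ℤ) ^ 2) (Finsupp.mapDomain_injective hv h')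
    simp only [map_sum, Finsupp.weight_single, one_smul, Nat.cast_add, Nat.cast_mul] at h
    exact Perm.eq_one_of_sum_add_sq_eq (f := fun k : Fin (m + 1) => ((k : ℕ) : ℤ))
      (fun a b h => Fin.ext (Int.ofNat_inj.mp h)) (by exact_mod_cast h)
  rw [coeff_det_of_X]
  simp [key]

end MvPolynomial

theorem PointwiseRational.of_isNilpotent_coeff {A : Type*} [CommRing A] {f : PowerSeries A}
    (hf : ∀ i, IsNilpotent (PowerSeries.coeff i f)) : PointwiseRational f := by
  intro K _ φ
  have hzero : PowerSeries.map φ f = 0 :=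
    PowerSeries.ext fun i => by simpa using ((hf i).map φ).eq_zero
  exact ⟨1, 0, one_ne_zero, by simp [hzero]⟩

theorem squareZeroVar_sq (i : ℕ+) : squareZeroVar i ^ 2 = 0 :=
  Ideal.Quotient.eq_zero_iff_mem.mpr (Ideal.subset_span ⟨i, rfl⟩)

theorem det_hankel_squareZeroVar_ne_zero {i : ℕ} (hi : 0 < i) (m : ℕ) :
    det (of fun j k : Fin (m + 1) => squareZeroVar ⟨i + (j + k), by omega⟩) ≠ 0 := by
  set v : ℕ → ℕ+ := fun a => ⟨i + a, by omega⟩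
  have hv : Injective v := fun a b h => Nat.add_left_cancel (congrArg Subtype.val h)
  have hdet : det (of fun j k : Fin (m + 1) => squareZeroVar ⟨i + (j + k), by omega⟩) =
      Ideal.Quotient.mk _
        (det (of fun j k : Fin (m + 1) => (X (v (j + k)) : MvPolynomial ℕ+ ℤ))) := by
    rw [RingHom.map_det]
    rfl
  rw [hdet, Ne, Ideal.Quotient.eq_zero_iff_mem]
  have hsqfree : ∀ s, (∑ k : Fin (m + 1), Finsupp.single (v (2 * k)) 1) s ≤ 1 :=
    Finsupp.sum_single_one_apply_le_one fun a b h => Fin.ext (by have := hv h; omega)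
  exact fun hmem => one_ne_zero <|
    (coeff_det_hankel_X hv m).symm.trans (coeff_eq_zero_of_mem_span_X_sq hmem hsqfree)

/-- The power series `f(t) = Σ_{i≥1} xᵢ tⁱ` over `ℤ[x₁, x₂, …]/(x₁², x₂², …)` is pointwise
rational but not determinantally rational. -/
theorem pointwiseRational_not_determinantallyRational :
    PointwiseRational
      (PowerSeries.mk fun i => if h : 0 < i then squareZeroVar ⟨i, h⟩ else 0) ∧
    ¬ DeterminantallyRational
      (PowerSeries.mk fun i => if h : 0 < i then squareZeroVar ⟨i, h⟩ else 0) := by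
  refine ⟨PointwiseRational.of_isNilpotent_coeff fun i => ?_, fun ⟨m, n, hdet⟩ => ?_⟩
  · rw [PowerSeries.coeff_mk]
    split_ifs
    exacts [⟨2, squareZeroVar_sq _⟩, .zero]
  · apply det_hankel_squareZeroVar_ne_zero n.succ_pos m
    rw [← hdet (n + 1) n.lt_succ_self]
    congr
    ext j k
    simp [add_assoc]
end

section
/- Let A be a commutative ring and let f ∈ A[[t]] be a power series with constant coefficient 1 (so f is a unit of A[[t]]). If f is globally rational, then its multiplicative inverse f⁻¹ ∈ A[[t]] is also globally rational. -/
theorem IsLeftRegular.of_forall_mul_eq_imp_eq {R : Type*} [Ring R] {a b c : R}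
    (hc : a * c = b) (huniq : ∀ x, a * x = b → x = c) : IsLeftRegular a := by
  intro x y hxy
  have hsol : a * (x - y + c) = b := by
    rw [mul_add, mul_sub, show a * x = a * y from hxy, sub_self, zero_add, hc]
  simpa only [add_eq_right, sub_eq_zero] using huniq _ hsol

theorem globallyRational_iff_isLeftRegular {A : Type*} [CommRing A] {f : PowerSeries A} :
    GloballyRational f ↔
      ∃ g h : Polynomial A, (g : PowerSeries A) * f = h ∧ IsLeftRegular (g : PowerSeries A) := by
  constructor
  · rintro ⟨g, h, hgf, huniq⟩
    exact ⟨g, h, hgf, .of_forall_mul_eq_imp_eq hgf huniq⟩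
  · rintro ⟨g, h, hgf, hreg⟩
    exact ⟨g, h, hgf, fun x hx => hreg (hx.trans hgf.symm)⟩

theorem globallyRational_inv_general {A : Type*} [CommRing A] (f g : PowerSeries A)
    (hfg : f * g = 1)
    (hf : GloballyRational f) : GloballyRational g := by
  obtain ⟨p, q, hpq, hp⟩ := globallyRational_iff_isLeftRegular.1 hf
  refine globallyRational_iff_isLeftRegular.2 ⟨q, p, ?_, ?_⟩
  · rw [← hpq, mul_assoc, hfg, mul_one]
  · rw [← hpq]
    exact hp.mul (isLeftRegular_of_mul_eq_one ((mul_comm g f).trans hfg))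

/-- If `f ∈ A[[t]]` has constant coefficient `1` and is globally rational, then its
multiplicative inverse in `A[[t]]` is also globally rational. -/
theorem globallyRational_inv {A : Type*} [CommRing A] (f g : PowerSeries A)
    (h1 : PowerSeries.constantCoeff f = 1) (hfg : f * g = 1)
    (hf : GloballyRational f) : GloballyRational g :=
  globallyRational_inv_general f g hfg hf
end

section
/- With G, F, ι, Θ as in the context, let f = Σ_{i≥0} g_i t^i ∈ Θ. Suppose there exist an integer n ≥ 1, an index i₀ ∈ ℕ, and a sequence (h_i)_{i∈ℕ} of elements of G with h_{i+n} = h_i for all i, such that g_{i+n} = ι(h_i)·g_i in F for all i > i₀. Then f is rational over F, i.e. there exist polynomials q, p ∈ F[t] with q ≠ 0 and q·f = p. -/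
/-!
Split `g` into its `n` residue classes modulo `n`. On the class of `r` the recurrence says that
`g` is eventually geometric with ratio `a r`, so `(1 - a r X^n)` times the corresponding series
is a polynomial. Hence the product of the `n` factors `1 - a r X^n`, whose constant coefficient
is `1`, turns `Σ gᵢ tⁱ` into a polynomial.
-/

open Polynomial (coeToPowerSeries)
open scoped Polynomial PowerSeries

namespace PowerSeries

variable {K : Type*} [CommRing K]

theorem mem_range_coe_of_coeff_eq_zero {φ : K⟦X⟧} {N : ℕ} (hφ : ∀ m ≥ N, coeff m φ = 0) :
    φ ∈ (coeToPowerSeries.ringHom : K[X] →+* K⟦X⟧).range := by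
  refine ⟨trunc N φ, ext fun m => ?_⟩
  rw [coeToPowerSeries.ringHom_apply, Polynomial.coeff_coe, coeff_trunc]
  split_ifs with hm
  · rfl
  · exact (hφ m (not_lt.mp hm)).symm

theorem one_sub_C_mul_X_pow_mul_mk_mem_range {u : ℕ → K} {c : K} {n i₀ : ℕ}
    (hu : ∀ i > i₀, u (i + n) = c * u i) :
    (1 - C c * X ^ n) * mk u ∈ (coeToPowerSeries.ringHom : K[X] →+* K⟦X⟧).range := by
  refine mem_range_coe_of_coeff_eq_zero (N := i₀ + n + 1) fun m hm => ?_
  obtain ⟨i, rfl⟩ : ∃ i, m = i + n := ⟨m - n, by omega⟩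
  rw [sub_mul, one_mul, mul_assoc, map_sub, coeff_C_mul, coeff_X_pow_mul, coeff_mk, coeff_mk,
    hu i (by omega), sub_self]

theorem mk_eq_sum_mk_residue {n : ℕ} (hn : 0 < n) (g : ℕ → K) :
    mk g = ∑ r ∈ Finset.range n, mk fun i => if i % n = r then g i else 0 := by
  ext m
  simp [map_sum, Nat.mod_lt m hn]

end PowerSeries

open PowerSeries

theorem exists_mul_mk_mem_range_of_periodic_ratios {K : Type*} [CommRing K] {n : ℕ} (hn : 0 < n)
    (i₀ : ℕ) {g a : ℕ → K} (ha : Function.Periodic a n)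
    (hrec : ∀ i > i₀, g (i + n) = a i * g i) :
    ∃ q : K[X], q.coeff 0 = 1 ∧
      (q : K⟦X⟧) * mk g ∈ (coeToPowerSeries.ringHom : K[X] →+* K⟦X⟧).range := by
  let P (r : ℕ) : K[X] := 1 - Polynomial.C (a r) * Polynomial.X ^ n
  have hP (r : ℕ) : coeToPowerSeries.ringHom (P r) = 1 - C (a r) * X ^ n := by simp [P]
  have hresidue (r : ℕ) : ∀ i > i₀, (if (i + n) % n = r then g (i + n) else 0) =
      a r * if i % n = r then g i else 0 := by
    intro i hi
    rw [Nat.add_mod_right]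
    split_ifs with hr
    · rw [hrec i hi, ← hr, ha.map_mod_nat]
    · rw [mul_zero]
  refine ⟨∏ r ∈ Finset.range n, P r, ?_, ?_⟩
  · simp [P, Polynomial.coeff_zero_eq_eval_zero, Polynomial.eval_prod, hn.ne']
  rw [← coeToPowerSeries.ringHom_apply, map_prod, mk_eq_sum_mk_residue hn, Finset.mul_sum]
  refine Subring.sum_mem _ fun r hr => ?_
  rw [← Finset.prod_erase_mul _ _ hr, mul_assoc, hP]
  exact Subring.mul_mem _ (Subring.prod_mem _ fun s _ => ⟨P s, rfl⟩)
    (one_sub_C_mul_X_pow_mul_mk_mem_range (hresidue r))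

theorem rational_of_eventually_periodic_ratios_general
    {G : Type*} [CommGroup G]
    (g : ℕ → FractionRing (MonoidAlgebra ℤ G))
    (n : ℕ) (hn : 1 ≤ n) (i₀ : ℕ) (h : ℕ → G)
    (hper : ∀ i, h (i + n) = h i)
    (hrec : ∀ i > i₀, g (i + n) =
      algebraMap (MonoidAlgebra ℤ G) (FractionRing (MonoidAlgebra ℤ G))
        (MonoidAlgebra.of ℤ G (h i)) * g i) :
    ∃ q p : Polynomial (FractionRing (MonoidAlgebra ℤ G)), q ≠ 0 ∧
      (q : PowerSeries (FractionRing (MonoidAlgebra ℤ G))) * PowerSeries.mk g =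
        (p : PowerSeries (FractionRing (MonoidAlgebra ℤ G))) := by
  have hperiodic : Function.Periodic (fun i => algebraMap (MonoidAlgebra ℤ G)
      (FractionRing (MonoidAlgebra ℤ G)) (MonoidAlgebra.of ℤ G (h i))) n := fun i => by
    simp only [hper]
  obtain ⟨q, hq, p, hp⟩ := exists_mul_mk_mem_range_of_periodic_ratios hn i₀ hperiodic hrec
  exact ⟨q, p, fun h0 => by simp [h0] at hq, hp.symm⟩

/-- Let `G` be a free abelian group (written multiplicatively), `ℤ[G]` its group ring (an
integral domain), and `F` its field of fractions.  If the coefficient sequence `g : ℕ → F` of a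
power series `Σ gᵢ tⁱ`, all of whose coefficients are `0` or elements of `G`, is eventually
periodically-geometric — i.e. there are `n ≥ 1`, `i₀` and a sequence `hᵢ ∈ G`, periodic with
period `n`, with `g_{i+n} = hᵢ · gᵢ` for `i > i₀` — then the power series is rational over `F`. -/
theorem rational_of_eventually_periodic_ratios
    {G : Type*} [CommGroup G] [Module.Free ℤ (Additive G)]
    [IsDomain (MonoidAlgebra ℤ G)]
    (g : ℕ → FractionRing (MonoidAlgebra ℤ G))
    (hΘ : ∀ i, g i = 0 ∨ ∃ γ : G, g i =
      algebraMap (MonoidAlgebra ℤ G) (FractionRing (MonoidAlgebra ℤ G))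
        (MonoidAlgebra.of ℤ G γ))
    (n : ℕ) (hn : 1 ≤ n) (i₀ : ℕ) (h : ℕ → G)
    (hper : ∀ i, h (i + n) = h i)
    (hrec : ∀ i > i₀, g (i + n) =
      algebraMap (MonoidAlgebra ℤ G) (FractionRing (MonoidAlgebra ℤ G))
        (MonoidAlgebra.of ℤ G (h i)) * g i) :
    ∃ q p : Polynomial (FractionRing (MonoidAlgebra ℤ G)), q ≠ 0 ∧
      (q : PowerSeries (FractionRing (MonoidAlgebra ℤ G))) * PowerSeries.mk g =
        (p : PowerSeries (FractionRing (MonoidAlgebra ℤ G))) :=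
  rational_of_eventually_periodic_ratios_general g n hn i₀ h hper hrec
end

section
/- Let M be the multiplicative monoid of polynomials p ∈ ℤ[s] with constant coefficient p(0) = 1. Then M is a free commutative monoid: every p ∈ M can be written as the product of a multiset of polynomials, each of which lies in M and is a prime element of the ring ℤ[s], and this multiset is uniquely determined by p. -/
/-!
Since `ℤ[s]` is a UFD, `p` factors into primes up to units. The units of `ℤ[s]` are `±1`, and
each prime factor `q` of `p` has constant coefficient dividing `p(0) = 1`, so `q` has exactly one
associate with constant coefficient `1`. Replacing each factor by that associate gives the
factorization, and uniqueness up to associates becomes uniqueness on the nose.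
-/

open Polynomial

namespace UniqueFactorizationMonoid

variable {α : Type*} [CommMonoidWithZero α] {N : Submonoid α}

theorem eq_of_prime_factors_mem [IsCancelMulZero α] (hN : Set.InjOn Associates.mk (N : Set α))
    {m m' : Multiset α} (hm : ∀ q ∈ m, q ∈ N ∧ Prime q) (hm' : ∀ q ∈ m', q ∈ N ∧ Prime q)
    (h : m.prod = m'.prod) : m = m' := by
  have hrel : Multiset.Rel Associated m m' :=
    prime_factors_unique (fun q hq => (hm q hq).2) (fun q hq => (hm' q hq).2) (h ▸ .refl _)
  rw [← Multiset.rel_eq]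
  exact hrel.mono fun a ha b hb hab =>
    hN (hm a ha).1 (hm' b hb).1 (Associates.mk_eq_mk_iff_associated.2 hab)

theorem exists_prime_factors_mem [UniqueFactorizationMonoid α]
    (hN : Set.InjOn Associates.mk (N : Set α))
    (hdvd : ∀ x ∈ N, ∀ q, q ∣ x → ∃ q' ∈ N, Associated q q') {p : α} (hp : p ∈ N)
    (hp0 : p ≠ 0) :
    ∃ m : Multiset α, (∀ q ∈ m, q ∈ N ∧ Prime q) ∧ m.prod = p := by
  obtain ⟨f, hf, hfp⟩ := exists_prime_factors p hp0
  choose! rep hrepN hrep using fun q (hq : q ∈ f) =>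
    hdvd p hp q ((Multiset.dvd_prod hq).trans hfp.dvd)
  have hprime : ∀ q ∈ f.map rep, q ∈ N ∧ Prime q := by
    simp only [Multiset.mem_map]
    rintro _ ⟨q, hq, rfl⟩
    exact ⟨hrepN q hq, (hrep q hq).prime (hf q hq)⟩
  have hassoc : Associated f.prod (f.map rep).prod := by
    rw [← Associates.mk_eq_mk_iff_associated, ← Associates.prod_mk, ← Associates.prod_mk,
      Multiset.map_map]
    exact congrArg _ <| Multiset.map_congr rfl fun q hq =>
      Associates.mk_eq_mk_iff_associated.2 (hrep q hq)
  refine ⟨f.map rep, hprime, hN ?_ hp ?_⟩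
  · exact N.multiset_prod_mem _ fun q hq => (hprime q hq).1
  · exact Associates.mk_eq_mk_iff_associated.2 (hassoc.symm.trans hfp)

end UniqueFactorizationMonoid

namespace Polynomial

variable {R : Type*}

theorem eq_of_associated_of_coeff_zero_eq_one [CommSemiring R] [NoZeroDivisors R] {q r : R[X]}
    (hq : q.coeff 0 = 1) (hr : r.coeff 0 = 1) (h : Associated q r) : q = r := by
  obtain ⟨u, rfl⟩ := h
  have hu : (u : R[X]) = C ((u : R[X]).coeff 0) :=
    eq_C_of_natDegree_eq_zero (natDegree_eq_zero_of_isUnit u.isUnit)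
  have hu1 : (u : R[X]).coeff 0 = 1 := by simpa [mul_coeff_zero, hq] using hr
  rw [hu, hu1, C_1, mul_one]

theorem exists_associated_coeff_zero_eq_one [CommSemiring R] {q : R[X]}
    (hq : IsUnit (q.coeff 0)) : ∃ q' : R[X], Associated q q' ∧ q'.coeff 0 = 1 := by
  refine ⟨C ((hq.unit⁻¹ : Rˣ) : R) * q,
    (associated_unit_mul_left q _ (isUnit_C.2 (Units.isUnit _))).symm, ?_⟩
  rw [mul_coeff_zero, coeff_C_zero, hq.val_inv_mul]

end Polynomial

/-- The monoid `M` of polynomials in `ℤ[s]` with constant coefficient `1` is a free commutative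
monoid: every such polynomial is the product of a unique multiset of prime polynomials with
constant coefficient `1`. -/
theorem unique_prime_factorization_constantCoeff_one
    (p : Polynomial ℤ) (hp : p.coeff 0 = 1) :
    ∃! m : Multiset (Polynomial ℤ),
      (∀ q ∈ m, q.coeff 0 = 1 ∧ Prime q) ∧ m.prod = p := by
  let N := MonoidHom.mker (constantCoeff : ℤ[X] →+* ℤ)
  have hmem (q : ℤ[X]) : q ∈ N ↔ q.coeff 0 = 1 := MonoidHom.mem_mker
  have hN : Set.InjOn Associates.mk N := fun q hq r hr h =>
    eq_of_associated_of_coeff_zero_eq_one ((hmem q).1 hq) ((hmem r).1 hr)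
      (Associates.mk_eq_mk_iff_associated.1 h)
  have hdvd : ∀ x ∈ N, ∀ q, q ∣ x → ∃ q' ∈ N, Associated q q' := fun x hx q hq => by
    have hunit : IsUnit (q.coeff 0) :=
      isUnit_of_dvd_one (((hmem x).1 hx) ▸ map_dvd (constantCoeff : ℤ[X] →+* ℤ) hq)
    obtain ⟨q', hqq', hq'⟩ := exists_associated_coeff_zero_eq_one hunit
    exact ⟨q', (hmem q').2 hq', hqq'⟩
  simp only [← hmem]
  refine existsUnique_of_exists_of_unique ?_ fun m m' hm hm' =>
    UniqueFactorizationMonoid.eq_of_prime_factors_mem hN hm.1 hm'.1 (hm.2.trans hm'.2.symm)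
  exact UniqueFactorizationMonoid.exists_prime_factors_mem hN hdvd ((hmem p).2 hp)
    (by rintro rfl; simp at hp)
end

section
/- Let A be a commutative ring with a λ-structure (λⁿ)_{n≥0} and let (σⁿ)_{n≥0} be its opposite structure. An element a ∈ A is virtually finite with respect to (λⁿ) if and only if it is virtually finite with respect to (σⁿ). Concretely: if a = y − z where λ_t(y) and λ_t(z) are polynomials in t, then there exist u, v ∈ A with σ_t(u) and σ_t(v) polynomials in t and a = u − v, and conversely. -/
/-!
The opposite operations are the λ-operations of `-x` up to sign: `σⁿ(x) = (-1)ⁿ λⁿ(-x)`.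
Indeed additivity makes `λ_t` a homomorphism to the multiplicative group of `A⟦t⟧`, so
`λ_t(0)` is an idempotent unit, hence `1`, and `λ_t(-x) = λ_t(x)⁻¹`. Consequently `a = y - z`
with `λ_t(y)`, `λ_t(z)` polynomials if and only if `a = (-z) - (-y)` with `σ_t(-z)`, `σ_t(-y)`
polynomials.
-/

open Finset PowerSeries

namespace LambdaStructure

variable {A : Type*} [CommRing A] {l : ℕ → A → A}

theorem mk_add (hladd : ∀ n x y, l n (x + y) = ∑ p ∈ antidiagonal n, l p.1 x * l p.2 y)
    (x y : A) : mk (l · (x + y)) = mk (l · x) * mk (l · y) := by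
  ext n
  simp [coeff_mul, hladd]

theorem mk_zero (hl0 : ∀ x, l 0 x = 1)
    (hladd : ∀ n x y, l n (x + y) = ∑ p ∈ antidiagonal n, l p.1 x * l p.2 y) :
    mk (l · (0 : A)) = 1 := by
  have hunit : IsUnit (mk (l · (0 : A))) := isUnit_iff_constantCoeff.mpr (by simp [hl0])
  refine hunit.mul_left_cancel ?_
  rw [mul_one, ← mk_add hladd, add_zero]

theorem mk_neg_mul (hl0 : ∀ x, l 0 x = 1)
    (hladd : ∀ n x y, l n (x + y) = ∑ p ∈ antidiagonal n, l p.1 x * l p.2 y) (x : A) :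
    mk (l · (-x)) * mk (l · x) = 1 := by
  rw [← mk_add hladd, neg_add_cancel, mk_zero hl0 hladd]

theorem opposite_eq_neg_one_pow_mul {s : ℕ → A → A} (hl0 : ∀ x, l 0 x = 1)
    (hladd : ∀ n x y, l n (x + y) = ∑ p ∈ antidiagonal n, l p.1 x * l p.2 y)
    (hs : ∀ x, mk (s · x) * mk (fun n => (-1 : A) ^ n * l n x) = 1) (n : ℕ) (x : A) :
    s n x = (-1) ^ n * l n (-x) := by
  have hrescale : ∀ x : A, mk (fun n => (-1 : A) ^ n * l n x) = rescale (-1) (mk (l · x)) := by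
    intro x
    ext n
    simp [coeff_rescale]
  have hinv : rescale (-1 : A) (mk (l · (-x))) * mk (fun n => (-1 : A) ^ n * l n x) = 1 := by
    rw [hrescale, ← map_mul, mk_neg_mul hl0 hladd, map_one]
  have hσ : mk (s · x) = rescale (-1 : A) (mk (l · (-x))) :=
    left_inv_eq_right_inv (hs x) (by rw [mul_comm, hinv])
  simpa [coeff_rescale] using congrArg (coeff n) hσ

end LambdaStructure

theorem virtuallyFinite_iff_opposite_general {A : Type*} [CommRing A]
    (l : ℕ → A → A)
    (hl0 : ∀ x, l 0 x = 1)
    (hladd : ∀ n x y, l n (x + y) = ∑ p ∈ Finset.HasAntidiagonal.antidiagonal n, l p.1 x * l p.2 y)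
    (s : ℕ → A → A)
    (hs : ∀ x, (PowerSeries.mk fun n => s n x) *
      (PowerSeries.mk fun n => (-1 : A) ^ n * l n x) = 1)
    (a : A) :
    (∃ y z : A, a = y - z ∧ (∃ N, ∀ n > N, l n y = 0) ∧ (∃ N, ∀ n > N, l n z = 0)) ↔
    (∃ u v : A, a = u - v ∧ (∃ N, ∀ n > N, s n u = 0) ∧ (∃ N, ∀ n > N, s n v = 0)) := by
  have hfin : ∀ x, (∃ N, ∀ n > N, s n (-x) = 0) ↔ (∃ N, ∀ n > N, l n x = 0) := by
    intro x
    simp only [LambdaStructure.opposite_eq_neg_one_pow_mul hl0 hladd hs, neg_neg,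
      ((isUnit_neg_one (α := A)).pow _).mul_right_eq_zero]
  constructor
  · rintro ⟨y, z, rfl, hy, hz⟩
    exact ⟨-z, -y, by ring, (hfin z).mpr hz, (hfin y).mpr hy⟩
  · rintro ⟨u, v, rfl, hu, hv⟩
    refine ⟨-v, -u, by ring, (hfin (-v)).mp ?_, (hfin (-u)).mp ?_⟩ <;> rwa [neg_neg]

/-- Let `(λⁿ)` be a λ-structure on a commutative ring `A` and `(σⁿ)` its opposite structure
(`Σ σⁿ(x) tⁿ = (Σ λⁿ(x)(−t)ⁿ)⁻¹`).  An element `a ∈ A` is virtually finite with respect to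
`(λⁿ)` (a difference of elements with polynomial `λ_t`) if and only if it is virtually finite
with respect to `(σⁿ)`. -/
theorem virtuallyFinite_iff_opposite {A : Type*} [CommRing A]
    (l : ℕ → A → A)
    (hl0 : ∀ x, l 0 x = 1)
    (hl1 : ∀ x, l 1 x = x)
    (hladd : ∀ n x y, l n (x + y) = ∑ p ∈ Finset.HasAntidiagonal.antidiagonal n, l p.1 x * l p.2 y)
    (s : ℕ → A → A)
    (hs : ∀ x, (PowerSeries.mk fun n => s n x) *
      (PowerSeries.mk fun n => (-1 : A) ^ n * l n x) = 1)
    (a : A) :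
    (∃ y z : A, a = y - z ∧ (∃ N, ∀ n > N, l n y = 0) ∧ (∃ N, ∀ n > N, l n z = 0)) ↔
    (∃ u v : A, a = u - v ∧ (∃ N, ∀ n > N, s n u = 0) ∧ (∃ N, ∀ n > N, s n v = 0)) :=
  virtuallyFinite_iff_opposite_general l hl0 hladd s hs a
end
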